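/- arXiv:2310.05577 — 2 statements merged into one kernel-verified Lean document; each statement's English description precedes it below -/
import Mathlib

section
/- Let (I, ≤) be a poset with the Alexandrov topology τ_I. The category of sheaves of abelian groups on (I, τ_I) is equivalent to the functor category I^op ⥤ Ab: the assignment sending a diagram G : I^op ⥤ Ab to the presheaf G̃ with G̃(U) = lim_{i ∈ U} G(i) (limit over the full subposet U^op ⊆ I^op, with restriction maps induced by inclusions of open sets) takes values in sheaves, the assignment sending a sheaf F to the diagram i ↦ F(Λ_i) is inverse to it up to natural isomorphism, and the sheafification F̂ of an arbitrary presheaf F of abelian groups on (I, τ_I) satisfies F̂(U) ≅ lim_{i ∈ U} F(Λ_i) for every open U. -/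
/-!
STATEMENT 15: Let `(I, ≤)` be a poset with the Alexandrov topology `τ_I` (open sets are the
down-sets).  The category of sheaves of abelian groups on `(I, τ_I)` is equivalent to
`Iᵒᵖ ⥤ Ab`: the assignment sending a diagram `G` to the presheaf `G̃` with
`G̃(U) = lim_{i ∈ U} G(i)` (realized below concretely as the group of compatible families)
takes values in sheaves; the assignment sending a sheaf `F` to the diagram `i ↦ F(Λ_i)` is
inverse to it up to natural isomorphism; and the sheafification `F̂` of an arbitrary
presheaf `F` satisfies `F̂(U) ≅ lim_{i ∈ U} F(Λ_i)` for every open `U`.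
-/

open CategoryTheory CategoryTheory.Limits Opposite TopologicalSpace

/-- The Alexandrov topology on a poset: open sets are the down-sets. -/
def alexTop (I : Type) [PartialOrder I] : TopologicalSpace I where
  IsOpen U := ∀ i ∈ U, ∀ j, j ≤ i → j ∈ U
  isOpen_univ := fun _ _ _ _ => trivial
  isOpen_inter := fun s t hs ht i hi j hj => ⟨hs i hi.1 j hj, ht i hi.2 j hj⟩
  isOpen_sUnion := fun S hS i hi j hj => by
    obtain ⟨s, hsS, his⟩ := hi
    exact ⟨s, hsS, hS s hsS i his j hj⟩

/-- The open sets of the Alexandrov topology. -/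
abbrev AOpens (I : Type) [PartialOrder I] : Type := @Opens I (alexTop I)

/-- The principal down-set `Λ_i = {j : j ≤ i}`, an open set of the Alexandrov topology. -/
def Lam {I : Type} [PartialOrder I] (i : I) : AOpens I :=
  letI := alexTop I
  ⟨{ j | j ≤ i }, fun _ ha _ hj => le_trans hj ha⟩

lemma Lam_mono (I : Type) [PartialOrder I] : Monotone (Lam : I → AOpens I) :=
  fun _ _ h _ hk => le_trans hk h

/-- `Λ` as a functor `I ⥤ τ_I`. -/
def LamF (I : Type) [PartialOrder I] : I ⥤ AOpens I := (Lam_mono I).functor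

/-- The Grothendieck topology of the Alexandrov space `(I, τ_I)`. -/
abbrev AJ (I : Type) [PartialOrder I] : GrothendieckTopology (AOpens I) :=
  @Opens.grothendieckTopology I (alexTop I)

variable {I : Type} [PartialOrder I]

/-- The group of compatible families `(s_i)_{i ∈ U}`, `s_i ∈ G(i)`: the (inverse) limit
`lim_{i ∈ U} G(i)` realized concretely. -/
def compatSub (G : Iᵒᵖ ⥤ AddCommGrpCat.{0}) (U : AOpens I) :
    AddSubgroup (∀ i : {j : I // j ∈ U}, G.obj (op i.1)) where
  carrier := { s | ∀ (i j : {j : I // j ∈ U}) (h : i.1 ≤ j.1),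
      G.map (homOfLE h).op (s j) = s i }
  add_mem' := by
    intro a b ha hb i j h
    simp only [Pi.add_apply, map_add, ha i j h, hb i j h]
  zero_mem' := by
    intro i j h
    simp
  neg_mem' := by
    intro a ha i j h
    simp only [Pi.neg_apply, map_neg, ha i j h]

/-- The presheaf `G̃` associated with a diagram `G : Iᵒᵖ ⥤ Ab`:
`G̃(U) = lim_{i ∈ U} G(i)`, with restriction maps induced by inclusions of open sets. -/
noncomputable def tilde (G : Iᵒᵖ ⥤ AddCommGrpCat.{0}) : (AOpens I)ᵒᵖ ⥤ AddCommGrpCat.{0} where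
  obj U := AddCommGrpCat.of (compatSub G U.unop)
  map {U V} f :=
    AddCommGrpCat.ofHom
    { toFun := fun s => ⟨fun i => s.1 ⟨i.1, leOfHom f.unop i.2⟩,
        fun i j h => s.2 ⟨i.1, leOfHom f.unop i.2⟩ ⟨j.1, leOfHom f.unop j.2⟩ h⟩
      map_zero' := rfl
      map_add' := fun _ _ => rfl }
  map_id _ := rfl
  map_comp _ _ := rfl

lemma mem_of_le {U : AOpens I} {i j : I} (hi : i ∈ U) (h : j ≤ i) : j ∈ U := by
  letI := alexTop I
  exact U.2 i hi j h

lemma lam_le {U : AOpens I} {i : I} (hi : i ∈ U) : Lam i ≤ U :=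
  fun _ hj => mem_of_le hi hj

abbrev ATop (I : Type) [PartialOrder I] : TopCat := @TopCat.of I (alexTop I)

/-- pointwise computation of the restriction maps of `tilde`. -/
lemma tilde_map_apply (G : Iᵒᵖ ⥤ AddCommGrpCat.{0}) {U V : (AOpens I)ᵒᵖ} (f : U ⟶ V)
    (s : (tilde G).obj U) (i : {j : I // j ∈ V.unop}) :
    ((tilde G).map f s).1 i = s.1 ⟨i.1, leOfHom f.unop i.2⟩ := rfl

lemma tilde_isSheaf (G : Iᵒᵖ ⥤ AddCommGrpCat.{0}) : Presheaf.IsSheaf (AJ I) (tilde G) := by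
  letI := alexTop I
  refine (TopCat.Presheaf.isSheaf_iff_isSheafUniqueGluing (C := AddCommGrpCat.{0}) (X := ATop I)
    (tilde (I := I) G)).mpr ?_
  intro ι U sf hc
  -- well-definedness of values
  have key : ∀ (k l : ι) (x : I) (hk : x ∈ U k) (hl : x ∈ U l),
      (sf k).1 ⟨x, hk⟩ = (sf l).1 ⟨x, hl⟩ := by
    intro k l x hk hl
    have := congrArg (fun t => t.1 (⟨x, hk, hl⟩ : {j : I // j ∈ U k ⊓ U l})) (hc k l)
    exact this
  choose idx hidx using fun (x : {j : I // j ∈ iSup U}) =>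
    (Opens.mem_iSup).mp x.2
  refine ⟨⟨fun x => (sf (idx x)).1 ⟨x.1, hidx x⟩, ?_⟩, ?_, ?_⟩
  · intro x y h
    -- x ≤ y, both in iSup U; y ∈ U (idx y), hence x ∈ U (idx y)
    have hx : x.1 ∈ U (idx y) := mem_of_le (I := I) (U := U (idx y)) (hidx y) h
    have := (sf (idx y)).2 ⟨x.1, hx⟩ ⟨y.1, hidx y⟩ h
    rw [this]
    exact key _ _ _ hx (hidx x)
  · intro k
    apply Subtype.ext
    funext x
    exact key _ _ _ _ x.2
  · intro s hs
    apply Subtype.ext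
    funext x
    have := congrArg (fun t => t.1 (⟨x.1, hidx x⟩ : {j : I // j ∈ U (idx x)})) (hs (idx x))
    exact this

/-- Evaluation at the top element of `Λ_i` is an isomorphism. -/
def tildeLamIso (G : Iᵒᵖ ⥤ AddCommGrpCat.{0}) (i : I) :
    AddCommGrpCat.of (compatSub G (Lam i)) ≅ G.obj (op i) where
  hom := AddCommGrpCat.ofHom
    { toFun := fun s => s.1 ⟨i, le_refl i⟩
      map_zero' := rfl
      map_add' := fun _ _ => rfl }
  inv := AddCommGrpCat.ofHom
    { toFun := fun g => ⟨fun j => G.map (homOfLE j.2).op g, by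
        intro j k h
        show (G.map (homOfLE k.2).op ≫ G.map (homOfLE h).op) g = _
        rw [← G.map_comp]
        rfl⟩
      map_zero' := by apply Subtype.ext; funext j; exact map_zero _
      map_add' := fun a b => by apply Subtype.ext; funext j; exact map_add _ _ _ }
  hom_inv_id := by
    ext s j
    exact s.2 j ⟨i, le_refl i⟩ j.2
  inv_hom_id := by
    ext g
    show G.map (homOfLE (le_refl i)).op g = g
    have : homOfLE (le_refl i) = 𝟙 i := rfl
    rw [this, op_id, G.map_id]
    rfl

noncomputable def part2Iso (G : Iᵒᵖ ⥤ AddCommGrpCat.{0}) : (LamF I).op ⋙ tilde G ≅ G :=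
  NatIso.ofComponents (fun i => tildeLamIso G i.unop) (by
    intro X Y f
    ext s
    show ((tilde G).map ((LamF I).map f.unop).op s).1 ⟨Y.unop, le_refl _⟩ =
      G.map f (s.1 ⟨X.unop, le_refl _⟩)
    rw [tilde_map_apply]
    exact (s.2 ⟨Y.unop, leOfHom f.unop⟩ ⟨X.unop, le_refl _⟩ (leOfHom f.unop)).symm)

/-- The canonical map `P ⟶ tilde (restriction of P along Λ)`. -/
noncomputable def toTilde (P : (AOpens I)ᵒᵖ ⥤ AddCommGrpCat.{0}) : P ⟶ tilde ((LamF I).op ⋙ P) where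
  app U := AddCommGrpCat.ofHom
    { toFun := fun t => ⟨fun i => P.map (homOfLE (lam_le i.2)).op t, by
        intro i j h
        show (P.map (homOfLE (lam_le j.2)).op ≫ P.map ((LamF I).map (homOfLE h)).op) t
          = P.map (homOfLE (lam_le i.2)).op t
        exact (congrArg (fun (f : P.obj U ⟶ P.obj (op (Lam i.1))) => f t) (P.map_comp _ _)).symm⟩
      map_zero' := by apply Subtype.ext; funext i; exact map_zero _
      map_add' := fun a b => by apply Subtype.ext; funext i; exact map_add _ _ _ }
  naturality := by
    intro U V f
    ext t
    apply Subtype.ext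
    funext i
    show P.map (homOfLE (lam_le i.2)).op (P.map f t)
      = P.map (homOfLE (lam_le (leOfHom f.unop i.2))).op t
    show (P.map f ≫ P.map (homOfLE (lam_le i.2)).op) t = _
    rw [← P.map_comp]
    rfl

/-- Separation: sections of a sheaf agreeing on all `Λ_i`, `i ∈ U`, are equal. -/
lemma sep {P : (AOpens I)ᵒᵖ ⥤ AddCommGrpCat.{0}} (hP : Presheaf.IsSheaf (AJ I) P)
    (U : AOpens I) (a b : P.obj (op U))
    (h : ∀ i : {j : I // j ∈ U}, P.map (homOfLE (lam_le i.2)).op a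
      = P.map (homOfLE (lam_le i.2)).op b) : a = b := by
  letI := alexTop I
  let F : TopCat.Sheaf AddCommGrpCat.{0} (ATop I) := ⟨P, hP⟩
  let L : {j : I // j ∈ U} → AOpens I := fun i => Lam i.1
  have hcover : U ≤ iSup L := fun x hx =>
    Opens.mem_iSup.mpr ⟨⟨x, hx⟩, le_refl x⟩
  have hcompat : TopCat.Presheaf.IsCompatible F.1 L
      (fun i => P.map (homOfLE (lam_le i.2)).op a) := by
    intro i j
    show (P.map (homOfLE (lam_le i.2)).op ≫ P.map (homOfLE inf_le_left).op) a
      = (P.map (homOfLE (lam_le j.2)).op ≫ P.map (homOfLE inf_le_right).op) a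
    rw [← P.map_comp, ← P.map_comp]
    rfl
  obtain ⟨s, -, huniq⟩ := F.existsUnique_gluing' L U
    (fun i => homOfLE (lam_le i.2)) hcover (fun i => P.map (homOfLE (lam_le i.2)).op a) hcompat
  exact (huniq a fun i => rfl).trans (huniq b fun i => (h i).symm).symm

lemma toTilde_app_apply (P : (AOpens I)ᵒᵖ ⥤ AddCommGrpCat.{0}) (U : (AOpens I)ᵒᵖ)
    (t : P.obj U) (i : {j : I // j ∈ U.unop}) :
    ((toTilde P).app U t).1 i = P.map (homOfLE (lam_le i.2)).op t := rfl

lemma toTilde_bijective {P : (AOpens I)ᵒᵖ ⥤ AddCommGrpCat.{0}} (hP : Presheaf.IsSheaf (AJ I) P)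
    (U : (AOpens I)ᵒᵖ) : Function.Bijective ((toTilde P).app U) := by
  constructor
  · intro a b hab
    exact sep hP U.unop a b fun i => congrArg (fun t => t.1 i) hab
  · intro s
    letI := alexTop I
    let F : TopCat.Sheaf AddCommGrpCat.{0} (ATop I) := ⟨P, hP⟩
    let L : {j : I // j ∈ U.unop} → AOpens I := fun i => Lam i.1
    have hcover : U.unop ≤ iSup L := fun x hx => Opens.mem_iSup.mpr ⟨⟨x, hx⟩, le_refl x⟩
    have hcompat : TopCat.Presheaf.IsCompatible F.1 L (fun i => s.1 i) := by
      intro i j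
      apply sep hP (L i ⊓ L j)
      intro k
      have hki : (k.1 : I) ≤ i.1 := k.2.1
      have hkj : (k.1 : I) ≤ j.1 := k.2.2
      have hkU : k.1 ∈ U.unop := mem_of_le i.2 hki
      show (P.map (homOfLE inf_le_left).op ≫ P.map (homOfLE (lam_le k.2)).op) (s.1 i)
        = (P.map (homOfLE inf_le_right).op ≫ P.map (homOfLE (lam_le k.2)).op) (s.1 j)
      rw [← P.map_comp, ← P.map_comp]
      have h1 : P.map ((LamF I).map (homOfLE hki)).op (s.1 i) = s.1 ⟨k.1, hkU⟩ :=
        s.2 ⟨k.1, hkU⟩ i hki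
      have h2 : P.map ((LamF I).map (homOfLE hkj)).op (s.1 j) = s.1 ⟨k.1, hkU⟩ :=
        s.2 ⟨k.1, hkU⟩ j hkj
      exact h1.trans h2.symm
    obtain ⟨t, ht, -⟩ := F.existsUnique_gluing' L U.unop
      (fun i => homOfLE (lam_le i.2)) hcover (fun i => s.1 i) hcompat
    refine ⟨t, ?_⟩
    apply Subtype.ext
    funext i
    exact ht i

noncomputable def part3Iso {P : (AOpens I)ᵒᵖ ⥤ AddCommGrpCat.{0}}
    (hP : Presheaf.IsSheaf (AJ I) P) : tilde ((LamF I).op ⋙ P) ≅ P := by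
  haveI : ∀ U, IsIso ((toTilde P).app U) := fun U =>
    (ConcreteCategory.isIso_iff_bijective _).mpr (toTilde_bijective hP U)
  haveI := NatIso.isIso_of_isIso_app (toTilde P)
  exact (asIso (toTilde P)).symm

instance toTilde_locInj (F : (AOpens I)ᵒᵖ ⥤ AddCommGrpCat.{0}) :
    Presheaf.IsLocallyInjective (AJ I) (toTilde F) where
  equalizerSieve_mem {U} a b hab := by
    intro x hx
    refine ⟨Lam x, homOfLE (lam_le hx), ?_, le_refl x⟩
    show F.map (homOfLE (lam_le hx)).op a = F.map (homOfLE (lam_le hx)).op b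
    exact congrArg (fun t => t.1 ⟨x, hx⟩) hab

instance toTilde_locSurj (F : (AOpens I)ᵒᵖ ⥤ AddCommGrpCat.{0}) :
    Presheaf.IsLocallySurjective (AJ I) (toTilde F) where
  imageSieve_mem {U} s := by
    intro x hx
    refine ⟨Lam x, homOfLE (lam_le hx), ⟨s.1 ⟨x, hx⟩, ?_⟩, le_refl x⟩
    apply Subtype.ext
    funext i
    show F.map (homOfLE (lam_le i.2)).op (s.1 ⟨x, hx⟩) = s.1 ⟨i.1, mem_of_le hx i.2⟩
    exact s.2 ⟨i.1, mem_of_le hx i.2⟩ ⟨x, hx⟩ i.2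

noncomputable def part4Iso (F : (AOpens I)ᵒᵖ ⥤ AddCommGrpCat.{0}) (U : AOpens I) :
    (((presheafToSheaf (AJ I) AddCommGrpCat.{0}).obj F).val).obj (op U) ≅
      (tilde ((LamF I).op ⋙ F)).obj (op U) := by
  have hW : (AJ I).W (toTilde F) :=
    GrothendieckTopology.W_of_isLocallyBijective (AJ I) (toTilde F)
  haveI : IsIso ((presheafToSheaf (AJ I) AddCommGrpCat.{0}).map (toTilde F)) :=
    ((AJ I).W_iff (toTilde F)).mp hW
  let T : Sheaf (AJ I) AddCommGrpCat.{0} := ⟨tilde ((LamF I).op ⋙ F), tilde_isSheaf _⟩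
  let e1 : (presheafToSheaf (AJ I) AddCommGrpCat.{0}).obj F ≅
      (presheafToSheaf (AJ I) AddCommGrpCat.{0}).obj T.val :=
    asIso ((presheafToSheaf (AJ I) AddCommGrpCat.{0}).map (toTilde F))
  let e2 : (presheafToSheaf (AJ I) AddCommGrpCat.{0}).obj T.val ≅ T :=
    asIso ((sheafificationAdjunction (AJ I) AddCommGrpCat.{0}).counit.app T)
  exact ((sheafToPresheaf (AJ I) AddCommGrpCat.{0}).mapIso (e1 ≪≫ e2)).app (op U)

theorem statement15 (I : Type) [PartialOrder I] :
    -- (1) `G̃` is a sheaf for every diagram `G : Iᵒᵖ ⥤ Ab`: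
    (∀ G : Iᵒᵖ ⥤ AddCommGrpCat.{0}, Presheaf.IsSheaf (AJ I) (tilde G)) ∧
    -- (2) restricting `G̃` along `Λ` recovers `G` up to natural isomorphism:
    (∀ G : Iᵒᵖ ⥤ AddCommGrpCat.{0}, Nonempty ((LamF I).op ⋙ tilde G ≅ G)) ∧
    -- (3) every sheaf `F` is recovered, up to natural isomorphism, from its diagram
    -- `i ↦ F(Λ_i)`:
    (∀ P : (AOpens I)ᵒᵖ ⥤ AddCommGrpCat.{0}, Presheaf.IsSheaf (AJ I) P →
      Nonempty (tilde ((LamF I).op ⋙ P) ≅ P)) ∧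
    -- (4) the sheafification `F̂` of an arbitrary presheaf `F` satisfies
    -- `F̂(U) ≅ lim_{i ∈ U} F(Λ_i)`:
    (∀ (F : (AOpens I)ᵒᵖ ⥤ AddCommGrpCat.{0}) (U : AOpens I),
      Nonempty ((((presheafToSheaf (AJ I) AddCommGrpCat.{0}).obj F).val).obj (op U) ≅
        (tilde ((LamF I).op ⋙ F)).obj (op U))) := by
  exact ⟨fun G => tilde_isSheaf G, fun G => ⟨part2Iso G⟩,
    fun P hP => ⟨part3Iso hP⟩, fun F U => ⟨part4Iso F U⟩⟩
end

section
/- Let (I, ≤) be a poset with the Alexandrov topology τ_I, let G : I^op ⥤ Ab be a diagram of abelian groups, and let G̃ be the associated sheaf on (I, τ_I) with G̃(U) = lim_{i ∈ U} G(i) for every open U. Then for every n ≥ 0, the sheaf cohomology H^n(I, G̃) is isomorphic to lim^n_{I^op} G, the value at G of the n-th right derived functor of the limit functor on I^op ⥤ Ab. -/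
/-!
STATEMENT 16: Let `(I, ≤)` be a poset with the Alexandrov topology `τ_I`, `G : Iᵒᵖ ⥤ Ab`
a diagram of abelian groups, and `G̃` the associated sheaf on `(I, τ_I)` with
`G̃(U) = lim_{i ∈ U} G(i)` for every open `U`.  Then for every `n ≥ 0`, the sheaf
cohomology `H^n(I, G̃)` (the `n`-th right derived functor of the global sections functor,
applied to `G̃`) is isomorphic to `lim^n_{Iᵒᵖ} G`.
-/

open CategoryTheory CategoryTheory.Limits Opposite TopologicalSpace

variable {I : Type} [PartialOrder I]

noncomputable instance : (sheafToPresheaf (AJ I) AddCommGrpCat.{0}).Additive :=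
  { map_add := rfl }

/-- The global sections functor `Γ` on sheaves of abelian groups over `(I, τ_I)`. -/
noncomputable def gammaA (I : Type) [PartialOrder I] :
    Sheaf (AJ I) AddCommGrpCat.{0} ⥤ AddCommGrpCat.{0} :=
  sheafToPresheaf (AJ I) AddCommGrpCat.{0} ⋙ (evaluation (AOpens I)ᵒᵖ AddCommGrpCat.{0}).obj (op ⊤)

noncomputable instance : Functor.Additive (gammaA I) := by
  unfold gammaA; infer_instance

noncomputable instance : Functor.Additive
    (lim : (Iᵒᵖ ⥤ AddCommGrpCat.{0}) ⥤ AddCommGrpCat.{0}) := by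
  letI := preservesBinaryBiproducts_of_preservesBinaryProducts
    (lim : (Iᵒᵖ ⥤ AddCommGrpCat.{0}) ⥤ AddCommGrpCat.{0})
  exact Functor.additive_of_preservesBinaryBiproducts _

namespace Statement16

attribute [local instance] alexTop

variable {I : Type} [PartialOrder I]

/-- The poset `I` with the Alexandrov topology, as a `TopCat`. -/
abbrev AT (I : Type) [PartialOrder I] : TopCat := TopCat.of I

/-- The principal down-set of `i`, as an open set. -/
def down (i : I) : AOpens I :=
  ⟨{j | j ≤ i}, fun _ ha _ hj => le_trans hj ha⟩

lemma down_le {i : I} {U : AOpens I} (hi : i ∈ U) : down i ≤ U :=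
  fun k hk => U.2 i hi k hk

lemma mem_down_self {i : I} : i ∈ down i := le_refl i

/-- `down` as a functor `I ⥤ AOpens I`. -/
def downF (I : Type) [PartialOrder I] : I ⥤ AOpens I :=
  Monotone.functor (f := down) (fun _ _ h _ hk => le_trans hk h)

instance homSubsingleton {P : Type} [Preorder P] {a b : P} : Subsingleton (a ⟶ b) :=
  show Subsingleton (ULift (PLift (a ≤ b))) from inferInstance

instance homSubsingletonOp {P : Type} [Preorder P] {a b : Pᵒᵖ} : Subsingleton (a ⟶ b) :=
  ⟨fun f g => Quiver.Hom.unop_inj (Subsingleton.elim _ _)⟩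

lemma map_eq' {P : Type} [Preorder P] (F : Pᵒᵖ ⥤ AddCommGrpCat.{0}) {a b : Pᵒᵖ}
    (f g : a ⟶ b) (x : F.obj a) : F.map f x = F.map g x := by
  rw [Subsingleton.elim f g]

lemma map_map {P : Type} [Preorder P] (F : Pᵒᵖ ⥤ AddCommGrpCat.{0}) {a b c : Pᵒᵖ}
    (f : a ⟶ b) (g : b ⟶ c) (h : a ⟶ c) (x : F.obj a) :
    F.map g (F.map f x) = F.map h x := by
  rw [← comp_apply, ← F.map_comp, Subsingleton.elim (f ≫ g) h]

lemma map_id_apply {P : Type} [Preorder P] (F : Pᵒᵖ ⥤ AddCommGrpCat.{0}) {a : Pᵒᵖ}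
    (f : a ⟶ a) (x : F.obj a) : F.map f x = x := by
  rw [Subsingleton.elim f (𝟙 a), F.map_id]; rfl

lemma nat_app {P : Type} [Preorder P] {F F' : Pᵒᵖ ⥤ AddCommGrpCat.{0}} (α : F ⟶ F')
    {a b : Pᵒᵖ} (f : a ⟶ b) (x : F.obj a) :
    α.app b (F.map f x) = F'.map f (α.app a x) :=
  congrFun (congrArg (fun (g : F.obj a ⟶ F'.obj b) => (g : F.obj a → F'.obj b))
    (α.naturality f)) x

/-- `tilde` as a functor. -/
noncomputable def tildeF (I : Type) [PartialOrder I] :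
    (Iᵒᵖ ⥤ AddCommGrpCat.{0}) ⥤ ((AOpens I)ᵒᵖ ⥤ AddCommGrpCat.{0}) where
  obj := tilde
  map {G G'} η :=
    { app := fun U => AddCommGrpCat.ofHom
        { toFun := fun s => ⟨fun i => η.app (op i.1) (s.1 i), fun i j h => by
            show G'.map (homOfLE h).op (η.app (op j.1) (s.1 j)) = η.app (op i.1) (s.1 i)
            rw [← s.2 i j h]
            exact (nat_app η _ _).symm⟩
          map_zero' := Subtype.ext (funext fun i => map_zero _)
          map_add' := fun a b => Subtype.ext (funext fun i => map_add _ _ _) }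
      naturality := fun _ _ _ => rfl }
  map_id _ := rfl
  map_comp _ _ := rfl

end Statement16
namespace Statement16

attribute [local instance] alexTop

variable {I : Type} [PartialOrder I]

lemma tilde_map_apply (G : Iᵒᵖ ⥤ AddCommGrpCat.{0}) {U V : (AOpens I)ᵒᵖ} (f : U ⟶ V)
    (s : (tilde G).obj U) (i : {j : I // j ∈ V.unop}) :
    ((tilde G).map f s).1 i = s.1 ⟨i.1, leOfHom f.unop i.2⟩ := rfl

theorem tilde_isSheaf (G : Iᵒᵖ ⥤ AddCommGrpCat.{0}) : Presheaf.IsSheaf (AJ I) (tilde G) := by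
  suffices h : TopCat.Presheaf.IsSheaf
      (show TopCat.Presheaf AddCommGrpCat.{0} (AT I) by exact tilde (I := I) G) by exact h
  rw [TopCat.Presheaf.isSheaf_iff_isSheafUniqueGluing]
  intro ι U sf hsf
  -- the values of the sections agree wherever defined
  have key : ∀ (a b : ι) (j : I) (ha : j ∈ U a) (hb : j ∈ U b),
      ((sf a).1 ⟨j, ha⟩ : G.obj (op j)) = (sf b).1 ⟨j, hb⟩ := by
    intro a b j ha hb
    exact congrFun (congrArg Subtype.val (hsf a b)) ⟨j, ⟨ha, hb⟩⟩
  have memsup : ∀ (j : {j : I // j ∈ iSup U}), ∃ a, j.1 ∈ U a :=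
    fun j => Opens.mem_iSup.mp j.2
  refine ⟨⟨fun j => (sf (memsup j).choose).1 ⟨j.1, (memsup j).choose_spec⟩, ?_⟩, ?_, ?_⟩
  · intro i j h
    set a := (memsup j).choose with ha
    have hja : j.1 ∈ U a := (memsup j).choose_spec
    have hia : i.1 ∈ U a := (U a).2 j.1 hja i.1 h
    show G.map (homOfLE h).op ((sf a).1 ⟨j.1, hja⟩) = _
    rw [(sf a).2 ⟨i.1, hia⟩ ⟨j.1, hja⟩ h]
    exact key a _ i.1 hia _
  · intro a
    refine Subtype.ext (funext fun i => ?_)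
    exact key _ a i.1 _ i.2
  · intro t ht
    refine Subtype.ext (funext fun j => ?_)
    exact congrFun (congrArg Subtype.val (ht (memsup j).choose)) ⟨j.1, (memsup j).choose_spec⟩

end Statement16
namespace Statement16

attribute [local instance] alexTop

variable {I : Type} [PartialOrder I]

/-- `tilde`, as a functor into sheaves. -/
noncomputable def TS (I : Type) [PartialOrder I] :
    (Iᵒᵖ ⥤ AddCommGrpCat.{0}) ⥤ Sheaf (AJ I) AddCommGrpCat.{0} where
  obj G := ⟨tilde G, tilde_isSheaf G⟩
  map η := ⟨(tildeF I).map η⟩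
  map_id _ := Sheaf.hom_ext ((tildeF I).map_id _)
  map_comp f g := Sheaf.hom_ext ((tildeF I).map_comp f g)

/-- The inverse functor: evaluation on principal down-sets. -/
noncomputable def SF (I : Type) [PartialOrder I] :
    Sheaf (AJ I) AddCommGrpCat.{0} ⥤ (Iᵒᵖ ⥤ AddCommGrpCat.{0}) :=
  sheafToPresheaf _ _ ⋙ (Functor.whiskeringLeft _ _ _).obj (downF I).op

/-- The unit isomorphism `G(i) ≅ lim_{j ≤ i} G(j)`. -/
noncomputable def unitApp (G : Iᵒᵖ ⥤ AddCommGrpCat.{0}) (i : Iᵒᵖ) :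
    G.obj i ≅ (tilde G).obj (op (down i.unop)) where
  hom := AddCommGrpCat.ofHom
    { toFun := fun g => ⟨fun j => G.map (homOfLE j.2).op g, fun j k h => by
        exact map_map G _ _ _ g⟩
      map_zero' := Subtype.ext (funext fun j => map_zero _)
      map_add' := fun a b => Subtype.ext (funext fun j => map_add _ _ _) }
  inv := AddCommGrpCat.ofHom
    { toFun := fun s => s.1 ⟨i.unop, le_refl _⟩
      map_zero' := rfl
      map_add' := fun _ _ => rfl }
  hom_inv_id := by
    ext g
    exact map_id_apply G _ g
  inv_hom_id := by
    refine AddCommGrpCat.ext fun s => Subtype.ext (funext fun j => ?_)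
    exact s.2 j ⟨i.unop, le_refl _⟩ j.2

/-- The unit isomorphism `𝟭 ≅ TS ⋙ SF`. -/
noncomputable def unitIso (I : Type) [PartialOrder I] :
    𝟭 (Iᵒᵖ ⥤ AddCommGrpCat.{0}) ≅ TS I ⋙ SF I :=
  NatIso.ofComponents
    (fun G => NatIso.ofComponents (fun i => unitApp G i)
      (by
        intro a b f
        refine AddCommGrpCat.ext fun g => ?_
        rw [comp_apply, comp_apply]
        refine Subtype.ext (funext fun j => ?_)
        show G.map (homOfLE j.2).op (G.map f g) = _
        exact map_map G _ _ _ g))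
    (by
      intro G G' η
      refine NatTrans.ext (funext fun i => AddCommGrpCat.ext fun g =>
        Subtype.ext (funext fun j => ?_))
      exact (nat_app η _ g).symm)

/-- The counit map `F(U) ⟶ lim_{i ∈ U} F(↓i)`. -/
noncomputable def counitApp (F : Sheaf (AJ I) AddCommGrpCat.{0}) :
    F ⟶ (TS I).obj ((SF I).obj F) :=
  ⟨{ app := fun U => AddCommGrpCat.ofHom
      { toFun := fun s => ⟨fun i => F.val.map (homOfLE (down_le i.2)).op s,
          fun i j h => by exact map_map F.val _ _ _ s⟩
        map_zero' := Subtype.ext (funext fun j => map_zero _)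
        map_add' := fun a b => Subtype.ext (funext fun j => map_add _ _ _) }
     naturality := by
      intro U V f
      refine AddCommGrpCat.ext fun s => ?_
      erw [comp_apply, comp_apply]
      refine Subtype.ext (funext fun j => ?_)
      show F.val.map (homOfLE (down_le j.2)).op (F.val.map f s) = _
      exact map_map F.val _ _ _ s }⟩

/-- The counit as a natural transformation. -/
noncomputable def counitNat (I : Type) [PartialOrder I] :
    𝟭 (Sheaf (AJ I) AddCommGrpCat.{0}) ⟶ SF I ⋙ TS I where
  app F := counitApp F
  naturality F F' α := by
    refine Sheaf.hom_ext (NatTrans.ext (funext fun U => AddCommGrpCat.ext fun s => ?_))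
    refine Subtype.ext (funext fun j => ?_)
    show F'.val.map (homOfLE (down_le j.2)).op (α.hom.app U s) =
      α.hom.app (op (down j.1)) (F.val.map (homOfLE (down_le j.2)).op s)
    exact (nat_app α.hom _ s).symm

end Statement16
namespace Statement16

attribute [local instance] alexTop

variable {I : Type} [PartialOrder I]

/-- A sheaf on `(AJ I)` as a `TopCat`-sheaf. -/
noncomputable def toTS (F : Sheaf (AJ I) AddCommGrpCat.{0}) :
    TopCat.Sheaf AddCommGrpCat.{0} (AT I) :=
  ⟨by exact F.val, by exact F.cond⟩

lemma sheaf_eq_of_locally_eq (F : Sheaf (AJ I) AddCommGrpCat.{0}) {ι : Type}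
    (W : ι → AOpens I) (V : AOpens I) (iUV : ∀ i, W i ⟶ V) (hcover : V ≤ iSup W)
    (s t : F.val.obj (op V))
    (h : ∀ i, F.val.map (iUV i).op s = F.val.map (iUV i).op t) : s = t :=
  (toTS F).eq_of_locally_eq' W V iUV hcover s t h

lemma compat_val {F : Sheaf (AJ I) AddCommGrpCat.{0}} {U : AOpens I}
    (t : compatSub ((SF I).obj F) U) {i j : {k : I // k ∈ U}} (h : i.1 ≤ j.1)
    (f : (op (down j.1)) ⟶ (op (down i.1))) : F.val.map f (t.1 j) = t.1 i := by
  rw [← t.2 i j h]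
  exact map_eq' F.val _ _ _

/-- The canonical cover of `U` by principal down-sets. -/
def cover (U : AOpens I) : {i : I // i ∈ U} → AOpens I := fun i => down i.1

lemma cover_le (U : AOpens I) (i : {i : I // i ∈ U}) : cover U i ≤ U :=
  down_le i.2

lemma le_iSup_cover (U : AOpens I) : U ≤ iSup (cover U) :=
  fun x hx => Opens.mem_iSup.mpr ⟨⟨x, hx⟩, le_refl x⟩

lemma counitApp_bijective (F : Sheaf (AJ I) AddCommGrpCat.{0}) (U : (AOpens I)ᵒᵖ) :
    Function.Bijective ((counitApp F).hom.app U) := by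
  constructor
  · intro s s' hss
    refine sheaf_eq_of_locally_eq F (cover U.unop) U.unop
      (fun i => homOfLE (cover_le _ i)) (le_iSup_cover _) s s' (fun i => ?_)
    exact congrFun (congrArg Subtype.val hss) i
  · intro t
    have hcompat : TopCat.Presheaf.IsCompatible (toTS F).1 (cover U.unop)
        (fun i => t.1 i) := by
      intro a b
      have hmem : ∀ k : {k : I // k ∈ (cover U.unop a ⊓ cover U.unop b : AOpens I)},
          k.1 ∈ U.unop := fun k => U.unop.2 a.1 a.2 k.1 k.2.1
      let sa : F.val.obj (op (cover U.unop a)) := t.1 a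
      let sb : F.val.obj (op (cover U.unop b)) := t.1 b
      refine sheaf_eq_of_locally_eq F
        (cover (cover U.unop a ⊓ cover U.unop b)) (cover U.unop a ⊓ cover U.unop b)
        (fun k => homOfLE (cover_le _ k)) (le_iSup_cover _) _ _ (fun k => ?_)
      show F.val.map (homOfLE (cover_le _ k)).op
          (F.val.map (homOfLE (inf_le_left (a := cover U.unop a) (b := cover U.unop b))).op sa) =
        F.val.map (homOfLE (cover_le _ k)).op
          (F.val.map (homOfLE (inf_le_right (a := cover U.unop a) (b := cover U.unop b))).op sb)
      have l1 : F.val.map (homOfLE (cover_le _ k)).op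
          (F.val.map (homOfLE (inf_le_left (a := cover U.unop a) (b := cover U.unop b))).op sa) =
          t.1 ⟨k.1, hmem k⟩ :=
        (map_map F.val _ _
          (homOfLE (show down k.1 ≤ down a.1 from fun x hx => le_trans hx k.2.1)).op sa).trans
          (compat_val (i := ⟨k.1, hmem k⟩) (j := a) t k.2.1 _)
      have l2 : F.val.map (homOfLE (cover_le _ k)).op
          (F.val.map (homOfLE (inf_le_right (a := cover U.unop a) (b := cover U.unop b))).op sb) =
          t.1 ⟨k.1, hmem k⟩ :=
        (map_map F.val _ _
          (homOfLE (show down k.1 ≤ down b.1 from fun x hx => le_trans hx k.2.2)).op sb).trans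
          (compat_val (i := ⟨k.1, hmem k⟩) (j := b) t k.2.2 _)
      exact l1.trans l2.symm
    obtain ⟨s, hs, -⟩ := (toTS F).existsUnique_gluing' (cover U.unop) U.unop
      (fun i => homOfLE (cover_le _ i)) (le_iSup_cover _) (fun i => t.1 i) hcompat
    refine ⟨s, Subtype.ext (funext fun i => ?_)⟩
    exact hs i

instance counitApp_isIso (F : Sheaf (AJ I) AddCommGrpCat.{0}) : IsIso (counitApp F) := by
  haveI h1 : ∀ U, IsIso ((counitApp F).hom.app U) := fun U => by
    haveI h2 : IsIso ((forget AddCommGrpCat).map ((counitApp F).hom.app U)) :=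
      (isIso_iff_bijective _).mpr (counitApp_bijective F U)
    exact isIso_of_reflects_iso _ (forget AddCommGrpCat)
  haveI h1' : ∀ X, IsIso (((sheafToPresheaf (AJ I) AddCommGrpCat.{0}).map (counitApp F)).app X) :=
    fun X => h1 X
  haveI : IsIso ((sheafToPresheaf (AJ I) AddCommGrpCat.{0}).map (counitApp F)) :=
    NatIso.isIso_of_isIso_app _
  exact isIso_of_reflects_iso _ (sheafToPresheaf (AJ I) AddCommGrpCat.{0})

instance : IsIso (counitNat I) := by
  haveI : ∀ X, IsIso ((counitNat I).app X) := fun X => counitApp_isIso X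
  exact NatIso.isIso_of_isIso_app _

/-- The equivalence between diagrams on `I` and sheaves on the Alexandrov space of `I`. -/
noncomputable def equivTS (I : Type) [PartialOrder I] :
    (Iᵒᵖ ⥤ AddCommGrpCat.{0}) ≌ Sheaf (AJ I) AddCommGrpCat.{0} :=
  CategoryTheory.Equivalence.mk (TS I) (SF I) (unitIso I) (asIso (counitNat I)).symm

end Statement16
namespace Statement16

attribute [local instance] alexTop

variable {I : Type} [PartialOrder I]

/-- The cone over `G` with point `lim_{i ∈ I} G(i)` (sections over `⊤`). -/
noncomputable def topCone (G : Iᵒᵖ ⥤ AddCommGrpCat.{0}) : Cone G where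
  pt := (tilde G).obj (op (⊤ : AOpens I))
  π :=
    { app := fun i => AddCommGrpCat.ofHom
        { toFun := fun s => s.1 ⟨i.unop, trivial⟩
          map_zero' := rfl
          map_add' := fun _ _ => rfl }
      naturality := fun i j f => by
        refine AddCommGrpCat.ext fun s => ?_
        erw [comp_apply, comp_apply]
        show s.1 ⟨j.unop, trivial⟩ = G.map f (s.1 ⟨i.unop, trivial⟩)
        exact (s.2 ⟨j.unop, trivial⟩ ⟨i.unop, trivial⟩ (leOfHom f.unop)).symm.trans
          (map_eq' G _ _ _) }

/-- The canonical cone is a limit cone. -/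
noncomputable def topConeIsLimit (G : Iᵒᵖ ⥤ AddCommGrpCat.{0}) : IsLimit (topCone (I := I) G) where
  lift c := AddCommGrpCat.ofHom
    { toFun := fun x => ⟨fun i => c.π.app (op i.1) x, fun i j h => by
        have hw := congrFun (congrArg (fun (g : c.pt ⟶ G.obj (op i.1)) => (g : _ → _))
          (c.w (homOfLE h).op)) x
        show G.map (homOfLE h).op (c.π.app (op j.1) x) = c.π.app (op i.1) x
        exact (comp_apply (c.π.app (op j.1)) (G.map (homOfLE h).op) x).symm.trans hw⟩
      map_zero' := Subtype.ext (funext fun i => map_zero _)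
      map_add' := fun a b => Subtype.ext (funext fun i => map_add _ _ _) }
  fac c i := by
    refine AddCommGrpCat.ext fun x => ?_
    erw [comp_apply]
  uniq c m hm := by
    refine AddCommGrpCat.ext fun x => Subtype.ext (funext fun i => ?_)
    exact congrFun (congrArg (fun (g : c.pt ⟶ G.obj (op i.1)) => (g : _ → _))
      (hm (op i.1))) x

/-- Global sections of `tilde G` are the limit of `G`, naturally in `G`. -/
noncomputable def gammaTSHom (I : Type) [PartialOrder I] :
    TS I ⋙ gammaA I ⟶ (lim : (Iᵒᵖ ⥤ AddCommGrpCat.{0}) ⥤ AddCommGrpCat.{0}) where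
  app G := limit.lift G (topCone G)
  naturality G G' η := by
    refine limit.hom_ext (fun j => ?_)
    erw [Category.assoc, Category.assoc, limit.lift_π,
      show ((lim : (Iᵒᵖ ⥤ AddCommGrpCat.{0}) ⥤ AddCommGrpCat.{0}).map η) = limMap η from rfl,
      limMap_π, ← Category.assoc, limit.lift_π]
    refine AddCommGrpCat.ext fun x => ?_
    erw [comp_apply]

instance gammaTSHom_isIso : IsIso (gammaTSHom I) := by
  haveI : ∀ G, IsIso ((gammaTSHom I).app G) := by
    intro G
    have h : (gammaTSHom I).app G =
        ((topConeIsLimit G).conePointUniqueUpToIso (limit.isLimit G)).hom := rfl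
    rw [h]
    exact Iso.isIso_hom _
  exact NatIso.isIso_of_isIso_app _

/-- `Γ ∘ tilde ≅ lim`. -/
noncomputable def gammaTS (I : Type) [PartialOrder I] :
    TS I ⋙ gammaA I ≅ (lim : (Iᵒᵖ ⥤ AddCommGrpCat.{0}) ⥤ AddCommGrpCat.{0}) :=
  asIso (gammaTSHom I)

end Statement16
namespace Statement16

attribute [local instance] alexTop

variable {I : Type} [PartialOrder I]

instance TS_additive : (TS I).Additive where
  map_add := by
    intros
    exact Sheaf.hom_ext (NatTrans.ext (funext fun U => AddCommGrpCat.ext fun s =>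
      Subtype.ext (funext fun i => rfl)))

/-- Map an injective resolution along an exact functor preserving injectives. -/
noncomputable def mapInjectiveResolution {C D : Type*} [Category C] [Category D]
    [Abelian C] [Abelian D] (F : C ⥤ D) [F.Additive]
    [PreservesFiniteLimits F] [PreservesFiniteColimits F]
    (hI : ∀ (X : C), Injective X → Injective (F.obj X))
    {Z : C} (P : InjectiveResolution Z) : InjectiveResolution (F.obj Z) where
  cocomplex := (F.mapHomologicalComplex _).obj P.cocomplex
  injective n := hI _ (P.injective n)
  ι := (HomologicalComplex.singleMapHomologicalComplex F (ComplexShape.up ℕ) 0).inv.app Z ≫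
      (F.mapHomologicalComplex _).map P.ι
  quasiIso := by
    haveI : QuasiIso ((F.mapHomologicalComplex (ComplexShape.up ℕ)).map P.ι) :=
      HomologicalComplex.quasiIso_map_of_preservesHomology _ _
    infer_instance

end Statement16
theorem statement16 (I : Type) [PartialOrder I]
    [EnoughInjectives (Sheaf (AJ I) AddCommGrpCat.{0})]
    [EnoughInjectives (Iᵒᵖ ⥤ AddCommGrpCat.{0})]
    (G : Iᵒᵖ ⥤ AddCommGrpCat.{0})
    -- `G̃`, the sheaf whose underlying presheaf is `U ↦ lim_{i ∈ U} G(i)`: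
    (Gt : Sheaf (AJ I) AddCommGrpCat.{0}) (hGt : Gt.val = tilde G) (n : ℕ) :
    Nonempty
      ((((gammaA I).rightDerived n).obj Gt) ≅
        (((lim : (Iᵒᵖ ⥤ AddCommGrpCat.{0}) ⥤ AddCommGrpCat.{0}).rightDerived n).obj G)) := by
  haveI : (Statement16.TS I).IsEquivalence :=
    inferInstanceAs ((Statement16.equivTS I).functor.IsEquivalence)
  haveI : (Statement16.SF I).IsEquivalence :=
    inferInstanceAs ((Statement16.equivTS I).inverse.IsEquivalence)
  haveI : PreservesFiniteLimits (Statement16.TS I) := inferInstance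
  haveI : PreservesFiniteColimits (Statement16.TS I) := inferInstance
  haveI : (Statement16.SF I).PreservesMonomorphisms := inferInstance
  have hInj : ∀ (X : Iᵒᵖ ⥤ AddCommGrpCat.{0}), Injective X →
      Injective ((Statement16.TS I).obj X) := by
    intro X hX
    haveI := hX
    exact Injective.injective_of_adjoint (Statement16.equivTS I).symm.toAdjunction X
  have e1 : Gt ≅ (Statement16.TS I).obj G :=
    (sheafToPresheaf (AJ I) AddCommGrpCat.{0}).preimageIso
      (show (sheafToPresheaf (AJ I) AddCommGrpCat.{0}).obj Gt ≅
        (sheafToPresheaf (AJ I) AddCommGrpCat.{0}).obj ((Statement16.TS I).obj G) from eqToIso hGt)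
  obtain ⟨P⟩ := (HasInjectiveResolution.out (Z := G))
  let Q := Statement16.mapInjectiveResolution (Statement16.TS I) hInj P
  refine ⟨?_⟩
  calc (((gammaA I).rightDerived n).obj Gt)
      ≅ ((gammaA I).rightDerived n).obj ((Statement16.TS I).obj G) :=
        ((gammaA I).rightDerived n).mapIso e1
    _ ≅ (HomologicalComplex.homologyFunctor AddCommGrpCat.{0} (ComplexShape.up ℕ) n).obj
          (((gammaA I).mapHomologicalComplex _).obj Q.cocomplex) :=
        Q.isoRightDerivedObj (gammaA I) n
    _ ≅ (HomologicalComplex.homologyFunctor AddCommGrpCat.{0} (ComplexShape.up ℕ) n).obj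
          (((lim : (Iᵒᵖ ⥤ AddCommGrpCat.{0}) ⥤ AddCommGrpCat.{0}).mapHomologicalComplex _).obj
            P.cocomplex) :=
        (HomologicalComplex.homologyFunctor AddCommGrpCat.{0} (ComplexShape.up ℕ) n).mapIso
          ((NatIso.mapHomologicalComplex (Statement16.gammaTS I) (ComplexShape.up ℕ)).app
            P.cocomplex)
    _ ≅ (((lim : (Iᵒᵖ ⥤ AddCommGrpCat.{0}) ⥤ AddCommGrpCat.{0}).rightDerived n).obj G) :=
        (P.isoRightDerivedObj lim n).symm
end
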